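/- Let D be a finite set of defaults. If the formula a has finite rank i with respect to D and (a,b) belongs to the lexicographic closure D^l of D, then b has a rank with respect to D and the rank of b is at most i. -/

import Mathlib

open Set

/-- A default is a pair `(a, b)` of formulas, a formula being a set of models. -/
abbrev Default (M : Type*) := Set M × Set M

variable {M : Type*}

/-- The model `m` violates the default `d = (a, b)` iff `m ∈ a \ b`. -/
def Violates (m : M) (d : Default M) : Prop := m ∈ d.1 \ d.2

/-- The formula `c` is consistent with `B̃`, the set of material counterparts of the
defaults in `B`, iff `c ∩ ⋂ B̃ ≠ ∅`. -/
def ConsistentWith (c : Set M) (B : Set (Default M)) : Prop :=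
  (c ∩ ⋂ d ∈ B, (d.1ᶜ ∪ d.2)).Nonempty

/-- `B̃, c ⊨ d` : every model of `c` together with all material counterparts of `B`
is a model of `d`. -/
def EntailsWith (B : Set (Default M)) (c d : Set M) : Prop :=
  c ∩ ⋂ e ∈ B, (e.1ᶜ ∪ e.2) ⊆ d

/-- The level of the model `m` : the number of defaults of `D` violated by `m`. -/
noncomputable def level (D : Set (Default M)) (m : M) : ℕ :=
  {d ∈ D | Violates m d}.ncard

/-- `F` is a maxbase of `D` for `c` : `F ⊆ D`, `c` is consistent with `F̃`, and no
subset of `D` of strictly larger cardinality has its material counterparts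
consistent with `c`. -/
def Maxbase (D : Set (Default M)) (c : Set M) (F : Set (Default M)) : Prop :=
  F ⊆ D ∧ ConsistentWith c F ∧
    ∀ F' : Set (Default M), F' ⊆ D → F.ncard < F'.ncard → ¬ ConsistentWith c F'

/-- `E₀ = D`, `E_{i+1} = {(a,b) ∈ E_i | a is not consistent with Ẽ_i}`. -/
def Ee (D : Set (Default M)) : ℕ → Set (Default M)
  | 0 => D
  | (i + 1) => {d ∈ Ee D i | ¬ ConsistentWith d.1 (Ee D i)}

/-- `c` has rank `i` with respect to `D` : `i` is the least natural number such that
`c` is consistent with `Ẽ_i`. -/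
def HasRank (D : Set (Default M)) (c : Set M) (i : ℕ) : Prop :=
  ConsistentWith c (Ee D i) ∧ ∀ j < i, ¬ ConsistentWith c (Ee D j)

/-- `D_i = E_i \ E_{i+1}`. -/
def Dlev (D : Set (Default M)) (i : ℕ) : Set (Default M) := Ee D i \ Ee D (i + 1)

/-- `D_∞ = ⋂_i E_i`. -/
def Dinf (D : Set (Default M)) : Set (Default M) := ⋂ i, Ee D i

/-- `k` is the order of `D` : the least `k` such that `D_i = ∅` for every finite `i ≥ k`. -/
def IsOrder (D : Set (Default M)) (k : ℕ) : Prop :=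
  (∀ i, k ≤ i → Dlev D i = ∅) ∧ ∀ k', (∀ i, k' ≤ i → Dlev D i = ∅) → k ≤ k'

/-- The `(k+1)`-tuple associated to `X ⊆ D` : `n₀ = |D_∞ ∩ X|` and
`n_i = |D_{k-i} ∩ X|` for `1 ≤ i ≤ k`. -/
noncomputable def tup (D : Set (Default M)) (k : ℕ) (X : Set (Default M)) (i : ℕ) : ℕ :=
  if i = 0 then (Dinf D ∩ X).ncard else (Dlev D (k - i) ∩ X).ncard

/-- The seriousness ordering : `X ≺ Y` iff the tuple of `X` is lexicographically
smaller than the tuple of `Y`. -/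
def Serious (D : Set (Default M)) (k : ℕ) (X Y : Set (Default M)) : Prop :=
  ∃ j ≤ k, (∀ i < j, tup D k X i = tup D k Y i) ∧ tup D k X j < tup D k Y j

/-- `V(m)` : the set of defaults of `D` violated by the model `m`. -/
def Vset (D : Set (Default M)) (m : M) : Set (Default M) := {d ∈ D | Violates m d}

/-- The lexicographic closure `D^l` : `(a,b) ∈ D^l` iff every model of `a` that is
`≺`-minimal among the models of `a` satisfies `b` (models being compared via the
seriousness ordering of the sets of defaults they violate). -/
def LexClos (D : Set (Default M)) (k : ℕ) (a b : Set M) : Prop :=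
  ∀ m ∈ a, (∀ m' ∈ a, ¬ Serious D k (Vset D m') (Vset D m)) → m ∈ b

/-- `B` is a basis for `a` : `B ⊆ D`, `a` is consistent with `B̃`, and there is no
`B' ⊆ D` whose material counterparts are consistent with `a` and with `B ≺ B'`. -/
def LexBasis (D : Set (Default M)) (k : ℕ) (a : Set M) (B : Set (Default M)) : Prop :=
  B ⊆ D ∧ ConsistentWith a B ∧
    ∀ B' : Set (Default M), B' ⊆ D → ConsistentWith a B' → ¬ Serious D k B B'

/-- The rational closure of `D` : the pairs `(a,b)` such that either `a` has no rank,
or the rank of `a` is strictly smaller than the rank of `a ∩ bᶜ` (where `no rank`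
counts as larger than every natural number). -/
def RatClos (D : Set (Default M)) (a b : Set M) : Prop :=
  (¬ ∃ i, HasRank D a i) ∨
    ∃ i, HasRank D a i ∧
      ((¬ ∃ j, HasRank D (a ∩ bᶜ) j) ∨ ∃ j, HasRank D (a ∩ bᶜ) j ∧ i < j)

/-- `ℓ(X) = l` : `l` is the least index `i ≤ k` with `tup X i ≠ 0`, and `l = k + 1`
if the tuple of `X` is all zero. -/
def EllIs (D : Set (Default M)) (k : ℕ) (X : Set (Default M)) (l : ℕ) : Prop :=
  (l ≤ k ∧ tup D k X l ≠ 0 ∧ ∀ i < l, tup D k X i = 0) ∨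
    (l = k + 1 ∧ ∀ i ≤ k, tup D k X i = 0)

/-- `X ≪ Y` iff `ℓ(X) > ℓ(Y)`. -/
def Ll (D : Set (Default M)) (k : ℕ) (X Y : Set (Default M)) : Prop :=
  ∃ lx ly, EllIs D k X lx ∧ EllIs D k Y ly ∧ ly < lx

/-!
A model `m₀` of `a` witnessing that `a` is consistent with `Ẽᵢ` violates no default of `Eᵢ`,
so the entries `0, …, k - i` of its tuple vanish. A default of `Eᵢ` lies in `D_∞` or in some
`D_j` with `i ≤ j < k`, so a model violating one has a nonzero entry among those positions and
is strictly more serious than `m₀`. Since `≺` is the lexicographic order on `ℕ^{k+1}`, hence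
well-founded, `a` has a `≺`-minimal model `m`; it satisfies `Ẽᵢ` and, by `(a, b) ∈ D^l`, also `b`,
so `b` is consistent with `Ẽᵢ`.
-/

section Stratification

variable (D : Set (Default M))

lemma Ee_antitone : Antitone (Ee D) :=
  antitone_nat_of_succ_le fun _ _ hd => hd.1

lemma Ee_subset (i : ℕ) : Ee D i ⊆ D :=
  Ee_antitone D (Nat.zero_le i)

lemma Dlev_subset (j : ℕ) : Dlev D j ⊆ D :=
  sdiff_subset.trans (Ee_subset D j)

lemma Dinf_subset_Ee (i : ℕ) : Dinf D ⊆ Ee D i :=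
  iInter_subset _ i

lemma exists_mem_Dlev_of_mem_Ee {d : Default M} {i : ℕ} (hd : d ∈ Ee D i) (hinf : d ∉ Dinf D) :
    ∃ j, i ≤ j ∧ d ∈ Dlev D j := by
  by_contra! h
  have hmem : ∀ n, d ∈ Ee D (i + n) := by
    intro n
    induction n with
    | zero => exact hd
    | succ n ih => exact by_contra fun hn => h (i + n) (by omega) ⟨ih, hn⟩
  exact hinf (mem_iInter.2 fun n => Ee_antitone D (Nat.le_add_left n i) (hmem n))

lemma exists_hasRank_le_of_consistentWith {c : Set M} {i : ℕ} (h : ConsistentWith c (Ee D i)) :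
    ∃ j, HasRank D c j ∧ j ≤ i := by
  classical
  have hex : ∃ j, ConsistentWith c (Ee D j) := ⟨i, h⟩
  exact ⟨Nat.find hex, ⟨Nat.find_spec hex, fun _ => Nat.find_min hex⟩, Nat.find_le h⟩

end Stratification

section Seriousness

variable {D : Set (Default M)} {k : ℕ}

lemma serious_wellFounded : WellFounded (Serious D k) := by
  let key : Set (Default M) → Lex (Fin (k + 1) → ℕ) := fun X => toLex fun t => tup D k X t
  refine Subrelation.wf (r := InvImage (· < ·) key) ?_ (InvImage.wf key wellFounded_lt)
  rintro X Y ⟨j, hjk, heq, hlt⟩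
  exact ⟨⟨j, by omega⟩, fun t ht => heq t ht, hlt⟩

lemma serious_of_tup_eq_zero {X Y : Set (Default M)} {n : ℕ} (hn : n ≤ k)
    (hX : ∀ t ≤ n, tup D k X t = 0) (hY : ∃ t ≤ n, tup D k Y t ≠ 0) : Serious D k X Y := by
  classical
  obtain ⟨hle, hne⟩ := Nat.find_spec hY
  refine ⟨Nat.find hY, hle.trans hn, fun t ht => ?_, ?_⟩
  · have hYt : tup D k Y t = 0 := by
      by_contra hYt
      exact Nat.find_min hY ht ⟨(ht.trans_le hle).le, hYt⟩
    rw [hX t (ht.trans_le hle).le, hYt]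
  · rw [hX _ hle]
    exact Nat.pos_of_ne_zero hne

lemma tup_eq_zero_of_disjoint {X : Set (Default M)} {i : ℕ} (hX : Disjoint X (Ee D i))
    {t : ℕ} (ht : t ≤ k - i) : tup D k X t = 0 := by
  unfold tup
  split_ifs with h0
  · rw [(hX.symm.mono_left (Dinf_subset_Ee D i)).inter_eq, ncard_empty]
  · have hsub : Dlev D (k - t) ⊆ Ee D i :=
      sdiff_subset.trans (Ee_antitone D (by omega))
    rw [(hX.symm.mono_left hsub).inter_eq, ncard_empty]

lemma exists_tup_ne_zero (hD : D.Finite) (hk : ∀ j, k ≤ j → Dlev D j = ∅)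
    {Y : Set (Default M)} {i : ℕ} (hY : (Y ∩ Ee D i).Nonempty) :
    ∃ t ≤ k - i, tup D k Y t ≠ 0 := by
  obtain ⟨d, hdY, hdE⟩ := hY
  by_cases hinf : d ∈ Dinf D
  · refine ⟨0, Nat.zero_le _, ?_⟩
    rw [tup, if_pos rfl]
    exact ncard_ne_zero_of_mem ⟨hinf, hdY⟩
      (hD.subset (inter_subset_left.trans ((Dinf_subset_Ee D 0).trans (Ee_subset D 0))))
  · obtain ⟨j, hij, hdj⟩ := exists_mem_Dlev_of_mem_Ee D hdE hinf
    have hjk : j < k := by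
      by_contra! hkj
      rw [hk j hkj] at hdj
      exact hdj
    refine ⟨k - j, by omega, ?_⟩
    rw [tup, if_neg (by omega), Nat.sub_sub_self hjk.le]
    exact ncard_ne_zero_of_mem ⟨hdj, hdY⟩ (hD.subset (inter_subset_left.trans (Dlev_subset D j)))

lemma serious_of_disjoint_Ee (hD : D.Finite) (hk : ∀ j, k ≤ j → Dlev D j = ∅)
    {X Y : Set (Default M)} {i : ℕ} (hX : Disjoint X (Ee D i)) (hY : (Y ∩ Ee D i).Nonempty) :
    Serious D k X Y :=
  serious_of_tup_eq_zero (Nat.sub_le k i) (fun _ => tup_eq_zero_of_disjoint hX)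
    (exists_tup_ne_zero hD hk hY)

end Seriousness

section Models

variable (D : Set (Default M))

lemma mem_iInter_material_iff_disjoint_Vset {B : Set (Default M)} (hB : B ⊆ D) {m : M} :
    m ∈ ⋂ e ∈ B, (e.1ᶜ ∪ e.2) ↔ Disjoint (Vset D m) B := by
  simp only [mem_iInter, disjoint_right, Vset, Violates, mem_ofPred_eq, mem_union, mem_compl_iff,
    mem_sdiff, not_and, not_not, ← imp_iff_not_or]
  exact forall_congr' fun e => ⟨fun h he _ => h he, fun h he => h he (hB he)⟩

lemma exists_serious_minimal (k : ℕ) {a : Set M} (ha : a.Nonempty) :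
    ∃ m ∈ a, ∀ m' ∈ a, ¬ Serious D k (Vset D m') (Vset D m) :=
  (InvImage.wf (Vset D) serious_wellFounded).has_min a ha

end Models

/-- If `a` has finite rank `i` and `(a,b)` belongs to the lexicographic closure of
`D`, then `b` has a rank, which is at most `i`. -/
theorem rank_of_consequent_le
    (D : Set (Default M)) (hD : D.Finite) (k : ℕ) (hk : IsOrder D k)
    (a b : Set M) (i : ℕ) (ha : HasRank D a i) (h : LexClos D k a b) :
    ∃ j, HasRank D b j ∧ j ≤ i := by
  obtain ⟨m₀, hm₀a, hm₀⟩ := ha.1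
  obtain ⟨m, hma, hmin⟩ := exists_serious_minimal D k ⟨m₀, hm₀a⟩
  have hm₀E : Disjoint (Vset D m₀) (Ee D i) :=
    (mem_iInter_material_iff_disjoint_Vset D (Ee_subset D i)).1 hm₀
  have hmE : Disjoint (Vset D m) (Ee D i) := by
    by_contra hne
    exact hmin m₀ hm₀a
      (serious_of_disjoint_Ee hD hk.1 hm₀E (not_disjoint_iff_nonempty_inter.1 hne))
  exact exists_hasRank_le_of_consistentWith D
    ⟨m, h m hma hmin, (mem_iInter_material_iff_disjoint_Vset D (Ee_subset D i)).2 hmE⟩
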